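/- Let G=(V,E) be a temporal graph and let (S,f) with S = {S₀,…,S_k} be a Substream index for G. Then for every vertex u ∈ V and every vertex w ∈ V, the minimum duration of a temporal path from u to w computed within the substream S_{f(u)} equals the minimum duration of a temporal path from u to w in G. -/
import Mathlib


/-- A temporal edge with tail, head, availability time and transition time. -/
structure TEdge (V : Type) where
  tail : V
  head : V
  time : ℕ
  trans : ℕ
deriving DecidableEq

/-- `W` is a temporal walk starting at `v` using only edges from `E`. -/
def WalkFrom {V : Type} (E : Set (TEdge V)) (v : V) (W : List (TEdge V)) : Prop :=
  W ≠ [] ∧ (∀ e ∈ W, e ∈ E) ∧ (∀ e, W.head? = some e → e.tail = v) ∧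
  W.Chain' (fun e f => e.head = f.tail ∧ e.time + e.trans ≤ f.time)

/-- `ξ(v)`: the set of edges usable by some temporal walk starting at `v`. -/
def xi {V : Type} (E : Set (TEdge V)) (v : V) : Set (TEdge V) :=
  {e | ∃ W, WalkFrom E v W ∧ e ∈ W}

/-- The walk `W` ends at vertex `w`. -/
def EndsAt {V : Type} (W : List (TEdge V)) (w : V) : Prop :=
  W.getLast?.map TEdge.head = some w

/-- `W` is a temporal path from `v`: a walk visiting each vertex at most once. -/
def PathFrom {V : Type} (E : Set (TEdge V)) (v : V) (W : List (TEdge V)) : Prop :=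
  WalkFrom E v W ∧ (v :: W.map TEdge.head).Nodup

/-- The duration of a temporal walk: arrival time minus starting time. -/
def duration {V : Type} (W : List (TEdge V)) : ℕ :=
  ((W.getLast?.map fun e => e.time + e.trans).getD 0) - ((W.head?.map TEdge.time).getD 0)

/-- Minimum duration of a temporal path from `u` to `w` (`⊤` if unreachable). -/
noncomputable def tdist {V : Type} (E : Set (TEdge V)) (u w : V) : ℕ∞ :=
  sInf {d : ℕ∞ | ∃ W, PathFrom E u W ∧ EndsAt W w ∧ (duration W : ℕ∞) = d}

/-- Correctness of the Substream index for SSAD minimum-duration queries: if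
every substream is a subset of the edge set `E` and `ξ(u) ⊆ S_{f(u)}` for every
vertex `u`, then the minimum duration of a temporal path from `u` to `w`
computed within `S_{f(u)}` equals the one computed in the whole graph. -/
theorem substream_index_dist_correct {V : Type} {ι : Type} (E : Set (TEdge V))
    (S : ι → Set (TEdge V)) (f : V → ι)
    (hsub : ∀ i, S i ⊆ E) (hxi : ∀ u, xi E u ⊆ S (f u)) :
    ∀ u w : V, tdist (S (f u)) u w = tdist E u w := by
  intro u w
  have key : ∀ W, WalkFrom (S (f u)) u W ↔ WalkFrom E u W := by
    intro W
    constructor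
    · rintro ⟨h1, h2, h3, h4⟩
      exact ⟨h1, fun e he => hsub _ (h2 e he), h3, h4⟩
    · rintro ⟨h1, h2, h3, h4⟩
      exact ⟨h1, fun e he => hxi u ⟨W, ⟨h1, h2, h3, h4⟩, he⟩, h3, h4⟩
  unfold tdist
  congr 1
  ext d
  simp only [Set.mem_setOf_eq, PathFrom, key]
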